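/- In the discrete Stokes setting, if Γ is a subcomplex of the dual complex with χ(Γ) = 0 (e.g., Γ deformation-retracts to a core circle of an annulus region), and all the dual-edge weights θ_{ι(ε)} for ε ∈ ΔΓ are ≤ 0, then Σ_{e ∈ ∂Γ} α(e*) ≤ 0; hence if α is nonnegative and not identically zero on ∂Γ, this is a contradiction. -/

import Mathlib

/-!
Summing the triangle relations over the triangles of `Γ` and the edge relations over its edges,
the corners of `ΔΓ` are the only ones left over; since `θ ≤ 0` there and `χ(Γ) = 0`, this gives
`Σ_{e ∈ EG} α e ≤ π |FG|`. Reindexing corners by the rotation `nxt`, the endpoints of edges of `Γ`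
that are vertices of `FG` carry, by the vertex relations, exactly `4π |FG|`, so the boundary sum
is `4 (Σ_{e ∈ EG} α e - π |FG|) ≤ 0`.
-/

open Finset Real

/-- A combinatorial triangulation `O = (V, E, F)` of the torus with `m`
triangles. `Cor` is the set of the `3m` corners of triangles; `tri j` is the
triangle containing the corner `j`, `vert j` its vertex, `opp j` the edge of
its triangle opposite to it; `nxt` is the counterclockwise next corner inside
each triangle (a fixed-point free rotation of order 3 on each fiber of `tri`);
`sgm j` is the other corner opposite to the same edge `opp j`, in the triangle
adjacent across that edge.  The cardinality axioms encode `|F| = m`,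
`2|E| = 3m`, `2|V| = m` (so `χ = V - E + F = 0`, as for the torus), and the
last axiom says that the two endpoints of an edge (namely the vertices of the
two other corners of an adjacent triangle) do not depend, as an unordered
pair, on the side from which they are computed. -/
structure TorusTriangulation (Cor F E V : Type*)
    [Fintype Cor] [DecidableEq Cor] [Fintype F] [DecidableEq F]
    [Fintype E] [DecidableEq E] [Fintype V] [DecidableEq V] where
  m : ℕ
  hm : 0 < m
  tri : Cor → F
  vert : Cor → V
  opp : Cor → E
  nxt : Cor → Cor
  sgm : Cor → Cor
  card_cor : Fintype.card Cor = 3 * m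
  card_faces : Fintype.card F = m
  card_edges : 2 * Fintype.card E = 3 * m
  card_verts : 2 * Fintype.card V = m
  tri_nxt : ∀ j, tri (nxt j) = tri j
  nxt_nxt_nxt : ∀ j, nxt (nxt (nxt j)) = j
  nxt_ne : ∀ j, nxt j ≠ j
  tri_fiber : ∀ j k, tri j = tri k → k = j ∨ k = nxt j ∨ k = nxt (nxt j)
  sgm_sgm : ∀ j, sgm (sgm j) = j
  sgm_ne : ∀ j, sgm j ≠ j
  opp_sgm : ∀ j, opp (sgm j) = opp j
  opp_fiber : ∀ j k, opp j = opp k → k = j ∨ k = sgm j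
  opp_surj : Function.Surjective opp
  endpoints_sgm : ∀ j, ({vert (nxt j), vert (nxt (nxt j))} : Multiset V) =
    {vert (nxt (sgm j)), vert (nxt (nxt (sgm j)))}

variable {Cor F E V : Type*}
    [Fintype Cor] [DecidableEq Cor] [Fintype F] [DecidableEq F]
    [Fintype E] [DecidableEq E] [Fintype V] [DecidableEq V]

namespace TorusTriangulation

variable (T : TorusTriangulation Cor F E V)

lemma nxt_nxt_ne (j : Cor) : T.nxt (T.nxt j) ≠ j := fun h =>
  T.nxt_ne j (by simpa only [h] using T.nxt_nxt_nxt j)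

def nxtPerm : Equiv.Perm Cor where
  toFun := T.nxt
  invFun j := T.nxt (T.nxt j)
  left_inv := T.nxt_nxt_nxt
  right_inv := T.nxt_nxt_nxt

lemma sum_nxt_add_sum_nxt_nxt {M : Type*} [AddCommMonoid M] (φ : Cor → Cor → M) :
    ∑ k, (φ k (T.nxt k) + φ k (T.nxt (T.nxt k))) =
      ∑ j, (φ (T.nxt j) j + φ (T.nxt (T.nxt j)) j) := by
  have h₁ : ∑ k, φ k (T.nxt k) = ∑ j, φ (T.nxt (T.nxt j)) j := by
    simpa only [nxtPerm, Equiv.coe_fn_mk, T.nxt_nxt_nxt] using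
      Equiv.sum_comp T.nxtPerm fun j => φ (T.nxt (T.nxt j)) j
  have h₂ : ∑ k, φ k (T.nxt (T.nxt k)) = ∑ j, φ (T.nxt j) j := by
    simpa only [nxtPerm, Equiv.coe_fn_symm_mk, T.nxt_nxt_nxt] using
      Equiv.sum_comp T.nxtPerm.symm fun j => φ (T.nxt j) j
  rw [sum_add_distrib, sum_add_distrib, h₁, h₂, add_comm]

lemma filter_opp_eq (j : Cor) :
    univ.filter (fun k => T.opp k = T.opp j) = {j, T.sgm j} := by
  ext k
  simp only [mem_filter, mem_univ, true_and, mem_insert, mem_singleton]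
  refine ⟨T.opp_fiber j k ∘ Eq.symm, ?_⟩
  rintro (rfl | rfl)
  exacts [rfl, T.opp_sgm j]

lemma filter_tri_eq (j : Cor) :
    univ.filter (fun k => T.tri k = T.tri j) = {j, T.nxt j, T.nxt (T.nxt j)} := by
  ext k
  simp only [mem_filter, mem_univ, true_and, mem_insert, mem_singleton]
  refine ⟨T.tri_fiber j k ∘ Eq.symm, ?_⟩
  rintro (rfl | rfl | rfl)
  exacts [rfl, T.tri_nxt j, by rw [T.tri_nxt, T.tri_nxt]]

lemma tri_surjective : Function.Surjective T.tri := by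
  have hcard : #(univ : Finset Cor) ≤ 3 * #(univ.image T.tri) :=
    card_le_mul_card_image _ 3 fun t ht => by
      obtain ⟨j, -, rfl⟩ := mem_image.1 ht
      rw [T.filter_tri_eq]
      exact card_le_three
  have himage : univ.image T.tri = univ := by
    refine eq_univ_of_card _ (le_antisymm (card_le_univ _) ?_)
    rw [card_univ, T.card_cor] at hcard
    rw [T.card_faces]
    omega
  intro t
  simpa using himage.ge (mem_univ t)

lemma sum_filter_opp_mem {M : Type*} [AddCommMonoid M] (S : Finset E) {f : Cor → M}
    {g : E → M} (h : ∀ j, f j + f (T.sgm j) = g (T.opp j)) :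
    ∑ j ∈ univ.filter (fun j => T.opp j ∈ S), f j = ∑ e ∈ S, g e := by
  rw [← sum_fiberwise_eq_sum_filter]
  refine sum_congr rfl fun e _ => ?_
  obtain ⟨j, rfl⟩ := T.opp_surj e
  rw [T.filter_opp_eq, sum_pair (T.sgm_ne j).symm, h]

lemma sum_filter_tri_mem {M : Type*} [AddCommMonoid M] (S : Finset F) {f : Cor → M}
    {g : F → M} (h : ∀ j, f j + f (T.nxt j) + f (T.nxt (T.nxt j)) = g (T.tri j)) :
    ∑ j ∈ univ.filter (fun j => T.tri j ∈ S), f j = ∑ t ∈ S, g t := by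
  rw [← sum_fiberwise_eq_sum_filter]
  refine sum_congr rfl fun t _ => ?_
  obtain ⟨j, rfl⟩ := T.tri_surjective t
  have hj₁ : j ∉ ({T.nxt j, T.nxt (T.nxt j)} : Finset Cor) := by
    simp only [mem_insert, mem_singleton, not_or]
    exact ⟨(T.nxt_ne j).symm, (T.nxt_nxt_ne j).symm⟩
  have hj₂ : T.nxt j ≠ T.nxt (T.nxt j) := fun h' => T.nxt_ne (T.nxt j) h'.symm
  rw [T.filter_tri_eq, sum_insert hj₁, sum_pair hj₂, ← add_assoc, h]

end TorusTriangulation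

section DiscreteStokes

variable {T : TorusTriangulation Cor F E V} {θ : Cor → ℝ} {α : E → ℝ}
  {VG : Finset F} {EG : Finset E} {FG : Finset V}

lemma sum_alpha_le_pi_mul_card
    (hedge : ∀ j, θ j + θ (T.sgm j) = π - α (T.opp j))
    (htri : ∀ j, θ j + θ (T.nxt j) + θ (T.nxt (T.nxt j)) = π)
    (hclosE : ∀ j, T.opp j ∈ EG → T.tri j ∈ VG)
    (hχ : (VG.card : ℤ) - (EG.card : ℤ) + (FG.card : ℤ) = 0)
    (hΔ : ∀ j, T.tri j ∈ VG → T.opp j ∉ EG → θ j ≤ 0) :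
    ∑ e ∈ EG, α e ≤ π * FG.card := by
  have hVG : ∑ j ∈ univ.filter (fun j => T.tri j ∈ VG), θ j = π * VG.card := by
    rw [T.sum_filter_tri_mem VG (g := fun _ => π) htri, sum_const, nsmul_eq_mul,
      mul_comm]
  have hEG : ∑ j ∈ univ.filter (fun j => T.opp j ∈ EG), θ j = π * EG.card - ∑ e ∈ EG, α e := by
    rw [T.sum_filter_opp_mem EG (g := fun e => π - α e) hedge, sum_sub_distrib, sum_const,
      nsmul_eq_mul, mul_comm]
  have hsub : (univ.filter fun j => T.tri j ∈ VG).filter (fun j => T.opp j ∈ EG) =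
      univ.filter fun j => T.opp j ∈ EG := by
    ext j
    simpa using hclosE j
  have hΔsum :
      ∑ j ∈ (univ.filter fun j => T.tri j ∈ VG).filter (fun j => T.opp j ∉ EG), θ j ≤ 0 :=
    sum_nonpos fun j hj => by
      simp only [mem_filter, mem_univ, true_and] at hj
      exact hΔ j hj.1 hj.2
  have hsplit := sum_filter_add_sum_filter_not (univ.filter fun j => T.tri j ∈ VG)
    (fun j => T.opp j ∈ EG) θ
  rw [hsub, hVG, hEG] at hsplit
  have hχ' : (VG.card : ℝ) - EG.card + FG.card = 0 := by exact_mod_cast hχ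
  linear_combination hΔsum - hsplit - π * hχ'

lemma sum_interior_endpoints
    (hvert : ∀ v : V,
      ∑ j ∈ univ.filter (fun j => T.vert j = v),
        (α (T.opp (T.nxt j)) + α (T.opp (T.nxt (T.nxt j)))) = 4 * π)
    (hclosF : ∀ j, T.vert j ∈ FG →
      T.opp (T.nxt j) ∈ EG ∧ T.opp (T.nxt (T.nxt j)) ∈ EG) :
    ∑ j ∈ univ.filter (fun j => T.opp j ∈ EG),
        ((if T.vert (T.nxt j) ∈ FG then α (T.opp j) else 0) +
         (if T.vert (T.nxt (T.nxt j)) ∈ FG then α (T.opp j) else 0)) = 4 * π * FG.card := by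
  let φ : Cor → Cor → ℝ := fun k j => if T.vert k ∈ FG ∧ T.opp j ∈ EG then α (T.opp j) else 0
  calc _ = ∑ j, (φ (T.nxt j) j + φ (T.nxt (T.nxt j)) j) := by
        rw [sum_filter]
        refine sum_congr rfl fun j _ => ?_
        by_cases hj : T.opp j ∈ EG <;> simp [φ, hj]
    _ = ∑ k, (φ k (T.nxt k) + φ k (T.nxt (T.nxt k))) := (T.sum_nxt_add_sum_nxt_nxt φ).symm
    _ = ∑ k ∈ univ.filter (fun k => T.vert k ∈ FG),
          (α (T.opp (T.nxt k)) + α (T.opp (T.nxt (T.nxt k)))) := by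
        rw [sum_filter]
        refine sum_congr rfl fun k _ => ?_
        by_cases hk : T.vert k ∈ FG
        · simp [φ, hk, hclosF k hk]
        · simp [φ, hk]
    _ = ∑ _v ∈ FG, 4 * π := by
        rw [← sum_fiberwise_eq_sum_filter]
        exact sum_congr rfl fun v _ => hvert v
    _ = 4 * π * FG.card := by rw [sum_const, nsmul_eq_mul, mul_comm]

lemma sum_boundary_endpoints_eq
    (hvert : ∀ v : V,
      ∑ j ∈ univ.filter (fun j => T.vert j = v),
        (α (T.opp (T.nxt j)) + α (T.opp (T.nxt (T.nxt j)))) = 4 * π)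
    (hclosF : ∀ j, T.vert j ∈ FG →
      T.opp (T.nxt j) ∈ EG ∧ T.opp (T.nxt (T.nxt j)) ∈ EG) :
    ∑ j ∈ univ.filter (fun j => T.opp j ∈ EG),
        ((if T.vert (T.nxt j) ∈ FG then 0 else α (T.opp j)) +
         (if T.vert (T.nxt (T.nxt j)) ∈ FG then 0 else α (T.opp j))) =
      4 * (∑ e ∈ EG, α e - π * FG.card) := by
  have hsplit : ∀ j : Cor,
      ((if T.vert (T.nxt j) ∈ FG then 0 else α (T.opp j)) +
        (if T.vert (T.nxt (T.nxt j)) ∈ FG then 0 else α (T.opp j))) =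
      2 * α (T.opp j) -
        ((if T.vert (T.nxt j) ∈ FG then α (T.opp j) else 0) +
          (if T.vert (T.nxt (T.nxt j)) ∈ FG then α (T.opp j) else 0)) := by
    intro j
    split_ifs <;> ring
  have hall : ∑ j ∈ univ.filter (fun j => T.opp j ∈ EG), 2 * α (T.opp j) = ∑ e ∈ EG, 4 * α e :=
    T.sum_filter_opp_mem EG fun j => by rw [T.opp_sgm]; ring
  rw [sum_congr rfl fun j _ => hsplit j, sum_sub_distrib, hall,
    sum_interior_endpoints hvert hclosF, ← mul_sum]
  ring

lemma sum_boundary_endpoints_pos (hα : ∀ e, 0 ≤ α e) {j : Cor} (hjE : T.opp j ∈ EG)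
    (hjF : T.vert (T.nxt j) ∉ FG) (hj : 0 < α (T.opp j)) :
    0 < ∑ k ∈ univ.filter (fun k => T.opp k ∈ EG),
        ((if T.vert (T.nxt k) ∈ FG then 0 else α (T.opp k)) +
         (if T.vert (T.nxt (T.nxt k)) ∈ FG then 0 else α (T.opp k))) := by
  have hnonneg : ∀ k : Cor, ∀ p : Prop, [Decidable p] → 0 ≤ if p then 0 else α (T.opp k) :=
    fun k p _ => by split_ifs <;> simp [hα]
  refine sum_pos' (fun k _ => add_nonneg (hnonneg k _) (hnonneg k _))
    ⟨j, mem_filter.2 ⟨mem_univ j, hjE⟩, ?_⟩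
  rw [if_neg hjF]
  exact add_pos_of_pos_of_nonneg hj (hnonneg j _)

end DiscreteStokes

/-- Each (edge, outside endpoint) pair of `∂Γ` is seen by the two corners opposite the edge, so
the first sum is twice the boundary sum of the paper. -/
theorem discrete_stokes_no_reeb (T : TorusTriangulation Cor F E V)
    (θ : Cor → ℝ) (α : E → ℝ)
    (hedge : ∀ j, θ j + θ (T.sgm j) = π - α (T.opp j))
    (htri : ∀ j, θ j + θ (T.nxt j) + θ (T.nxt (T.nxt j)) = π)
    (hvert : ∀ v : V,
      ∑ j ∈ Finset.univ.filter (fun j => T.vert j = v),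
        (α (T.opp (T.nxt j)) + α (T.opp (T.nxt (T.nxt j)))) = 4 * π)
    (VG : Finset F) (EG : Finset E) (FG : Finset V)
    (hclosE : ∀ j, T.opp j ∈ EG → T.tri j ∈ VG)
    (hclosF : ∀ j, T.vert j ∈ FG →
      T.opp (T.nxt j) ∈ EG ∧ T.opp (T.nxt (T.nxt j)) ∈ EG)
    (hχ : (VG.card : ℤ) - (EG.card : ℤ) + (FG.card : ℤ) = 0)
    (hΔ : ∀ j, T.tri j ∈ VG → T.opp j ∉ EG → θ j ≤ 0) :
    (∑ j ∈ Finset.univ.filter (fun j => T.opp j ∈ EG),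
        ((if T.vert (T.nxt j) ∈ FG then 0 else α (T.opp j)) +
         (if T.vert (T.nxt (T.nxt j)) ∈ FG then 0 else α (T.opp j))) ≤ 0) ∧
    ((∀ e, 0 ≤ α e) →
      ¬ ∃ j, T.opp j ∈ EG ∧ T.vert (T.nxt j) ∉ FG ∧ 0 < α (T.opp j)) := by
  have hbdry := sum_boundary_endpoints_eq hvert hclosF
  have hle := sum_alpha_le_pi_mul_card hedge htri hclosE hχ hΔ
  refine ⟨by rw [hbdry]; linarith, fun hα ⟨j, hjE, hjF, hj⟩ => ?_⟩
  have hpos := sum_boundary_endpoints_pos hα hjE hjF hj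
  linarith
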